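/- Let q ≥ 3 and n ≥ 3. For every w ∈ C_q(n) and every w' ∈ A_q(n) ∪ B_q(n), no nonempty proper prefix of w is equal to a suffix of w'. -/

import Mathlib

/-- Value of a letter: 1 ↦ +1, 0 ↦ -1, other letters ↦ 0. -/
def mval (a : ℕ) : ℤ := if a = 1 then 1 else if a = 0 then -1 else 0

/-- Value-sum of a word. -/
def vsum (w : List ℕ) : ℤ := (w.map mval).sum

/-- A (q-2)-colored Motzkin word over the alphabet Z_q = {0,...,q-1}:
all letters < q, every prefix has nonnegative value-sum, total value-sum 0. -/
def IsMotzkinWord (q : ℕ) (w : List ℕ) : Prop :=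
  (∀ a ∈ w, a < q) ∧ (∀ u, u <+: w → 0 ≤ vsum u) ∧ vsum w = 0

/-- The set 𝓜_{q-2}(n) of (q-2)-colored Motzkin words of length n. -/
def MotzkinSet (q n : ℕ) : Set (List ℕ) := {w | w.length = n ∧ IsMotzkinWord q w}

/-- M_{q-2}(n), the number of (q-2)-colored Motzkin words of length n. -/
noncomputable def Mnum (q n : ℕ) : ℕ := (MotzkinSet q n).ncard

/-- The set Ê_{q-2}(n) of elevated (q-2)-colored Motzkin words of length n:
words 1α0 with α ∈ 𝓜_{q-2}(n-2). -/
def ElevatedSet (q n : ℕ) : Set (List ℕ) :=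
  {w | w.length = n ∧ ∃ α ∈ MotzkinSet q (n - 2), w = 1 :: (α ++ [0])}

/-- The set A_q(n). -/
def SetA (q n : ℕ) : Set (List ℕ) :=
  {w | ∃ i ≤ n / 2, ∃ α ∈ MotzkinSet q i, ∃ β ∈ ElevatedSet q (n - i), w = α ++ β} \
    {w | ∃ α ∈ ElevatedSet q (n / 2), ∃ β ∈ ElevatedSet q (n / 2), w = α ++ β}

/-- The set B_q(n). -/
def SetB (q n : ℕ) : Set (List ℕ) :=
  {w | ∃ i ≤ n / 2 - 1, ∃ α ∈ MotzkinSet q i, ∃ β ∈ ElevatedSet q (n - i - 1),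
    w = 1 :: (α ++ β)}

/-- The set C_q(n): words γ0 with γ a (q-2)-colored Motzkin word of length n-1
having no factor which is an elevated Motzkin word of length j ≥ ⌈n/2⌉. -/
def SetC (q n : ℕ) : Set (List ℕ) :=
  {w | ∃ γ ∈ MotzkinSet q (n - 1),
    (∀ j, (n + 1) / 2 ≤ j → ∀ β ∈ ElevatedSet q j, ¬ β <:+: γ) ∧ w = γ ++ [0]}

/-- The cross-bifix-free candidate set CBFS_q(n). -/
def CBFS (q n : ℕ) : Set (List ℕ) := SetA q n ∪ SetB q n ∪ SetC q n

/-- A word is bifix-free if no nonempty proper prefix of it is also a suffix of it. -/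
def BifixFree (w : List ℕ) : Prop :=
  ∀ u, u <+: w → u ≠ [] → u.length < w.length → ¬ u <:+ w

/-- BF_q(n): the set of bifix-free words of length n over Z_q. -/
def BF (q n : ℕ) : Set (List ℕ) := {w | w.length = n ∧ (∀ a ∈ w, a < q) ∧ BifixFree w}

/-- F_{k,q}(n): the number of words of length n over Z_q avoiding k consecutive 0's. -/
noncomputable def Fcount (k q n : ℕ) : ℕ :=
  {w : List ℕ | w.length = n ∧ (∀ a ∈ w, a < q) ∧ ¬ List.replicate k 0 <:+: w}.ncard

/-- The set S_{k,q}(n) of Bajic--Stojanovic--Chee--Kiah type words: words s of length n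
over Z_q with s₁ = ⋯ = s_k = 0, s_{k+1} ≠ 0, s_n ≠ 0, and such that the subword
s_{k+2} ⋯ s_{n-1} contains no k consecutive 0's. -/
def SetS (q k n : ℕ) : Set (List ℕ) :=
  {s | s.length = n ∧ (∀ a ∈ s, a < q) ∧ s.take k = List.replicate k 0 ∧
    s.getD k 0 ≠ 0 ∧ s.getLast? ≠ some 0 ∧
    ¬ List.replicate k 0 <:+: (s.drop (k + 1)).take (n - k - 2)}

/-
A word of `C_q(n)` is `γ0` with `γ` Motzkin, so a proper prefix `u` of it is a prefix of `γ` and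
has nonnegative value. Every word of `A_q(n) ∪ B_q(n)` ends in an elevated Motzkin word `β` of
length at least `⌈n/2⌉`. If `u` is also a suffix of it, either `u` is at least as long as `β`, so
`β` is a factor of `γ`, which `C_q(n)` forbids, or `u` is a nonempty proper suffix of `β = 1α0`,
whose value is negative since it is `-1` minus the value of a prefix of `α`.
-/

@[simp]
lemma vsum_append (a b : List ℕ) : vsum (a ++ b) = vsum a + vsum b := by
  simp [vsum]

lemma vsum_neg_of_suffix_of_mem_elevatedSet {q j : ℕ} {β u : List ℕ}
    (hβ : β ∈ ElevatedSet q j) (hu : u <:+ β) (hu_ne : u ≠ []) (hu_lt : u.length < β.length) :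
    vsum u < 0 := by
  obtain ⟨-, α, hα, rfl⟩ := hβ
  have hu_tail : u <:+ α ++ [0] := by
    rcases List.suffix_cons_iff.mp hu with rfl | h
    · simp at hu_lt
    · exact h
  obtain ⟨p, hp⟩ := hu_tail
  have hp_prefix : p <+: α := by
    rcases List.prefix_concat_iff.mp ⟨u, hp⟩ with rfl | h
    · simp_all
    · exact h
  have h_split : vsum p + vsum u = vsum α - 1 := by
    rw [← vsum_append, hp, vsum_append]; simp [vsum, mval, sub_eq_add_neg]
  have hp_nonneg := hα.2.2.1 p hp_prefix
  have hα_zero := hα.2.2.2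
  omega

lemma exists_elevated_suffix_of_mem_setA_union_setB {q n : ℕ} (hn : 2 ≤ n) {w : List ℕ}
    (hw : w ∈ SetA q n ∪ SetB q n) :
    ∃ j, (n + 1) / 2 ≤ j ∧ ∃ β ∈ ElevatedSet q j, β <:+ w := by
  rcases hw with ⟨⟨i, hi, α, -, β, hβ, rfl⟩, -⟩ | ⟨i, hi, α, -, β, hβ, rfl⟩
  · exact ⟨n - i, by omega, β, hβ, List.suffix_append α β⟩
  · exact ⟨n - i - 1, by omega, β, hβ, ⟨1 :: α, rfl⟩⟩

theorem setC_vs_setAB_no_cross_bifix_general (q n : ℕ) (hn : 3 ≤ n)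
    (w w' : List ℕ) (hw : w ∈ SetC q n) (hw' : w' ∈ SetA q n ∪ SetB q n) :
    ∀ u, u <+: w → u ≠ [] → u.length < w.length → ¬ u <:+ w' := by
  intro u hu_prefix hu_ne hu_lt hu_suffix
  obtain ⟨γ, hγ, h_no_factor, rfl⟩ := hw
  have hu_γ : u <+: γ := by
    rcases List.prefix_concat_iff.mp hu_prefix with rfl | h
    · simp at hu_lt
    · exact h
  obtain ⟨j, hj, β, hβ, hβ_suffix⟩ := exists_elevated_suffix_of_mem_setA_union_setB (by omega) hw'
  rcases le_or_gt β.length u.length with h_le | h_lt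
  · have hβ_u : β <:+ u := List.suffix_of_suffix_length_le hβ_suffix hu_suffix h_le
    exact h_no_factor j hj β hβ (hβ_u.isInfix.trans hu_γ.isInfix)
  · have h_neg := vsum_neg_of_suffix_of_mem_elevatedSet hβ
      (List.suffix_of_suffix_length_le hu_suffix hβ_suffix h_lt.le) hu_ne h_lt
    have h_nonneg := hγ.2.2.1 u hu_γ
    omega

/-- For w ∈ C_q(n) and w' ∈ A_q(n) ∪ B_q(n), no nonempty proper prefix of
w equals a suffix of w'. -/
theorem setC_vs_setAB_no_cross_bifix (q n : ℕ) (hq : 3 ≤ q) (hn : 3 ≤ n)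
    (w w' : List ℕ) (hw : w ∈ SetC q n) (hw' : w' ∈ SetA q n ∪ SetB q n) :
    ∀ u, u <+: w → u ≠ [] → u.length < w.length → ¬ u <:+ w' :=
  setC_vs_setAB_no_cross_bifix_general q n hn w w' hw hw'
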